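/- Let (M,ρ) be a complete metric space, let f : M → ℝ ∪ {+∞} be proper, lower semicontinuous and bounded below, and let g : M → ℝ be continuous. Assume |∇f|(x) > |∇g|(x) for every x ∈ dom f with |∇f|(x) ≠ 0. Then for each ε > 0 and each x₀ ∈ M there exists x with |∇f|(x) ≤ ε such that f(x) ≤ f(x₀) - ε·ρ(x, x₀) and f(x₀) - g(x₀) ≥ f(x) - g(x). In particular f - g ≥ inf { f(y) - g(y) : |∇f|(y) ≤ ε } everywhere. -/

import Mathlib

/-!
Ekeland's variational principle, applied to `f` on the closed sublevel set
`{f - g ≤ f x₀ - g x₀}`, gives a point `x` with `f x + ε ρ(x, x₀) ≤ f x₀` such that no other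
point `y` of that set has `f y + ε ρ(y, x) ≤ f x`. If `|∇f|(x) > ε`, then also
`|∇f|(x) > |∇g|(x)`, so for some `r > max ε |∇g|(x)` there are points `y` arbitrarily close to `x`
with `f x - f y > r ρ(x, y)` and `g x - g y < r ρ(x, y)`. Such a `y` lies in the sublevel set and
beats `x`, a contradiction.
-/

open Filter Topology ENNReal

/-- The positive part `[x]⁺` of an extended real, as an element of `ℝ≥0∞`. -/
noncomputable def erealPos (x : EReal) : ℝ≥0∞ := if x = ⊤ then ⊤ else ENNReal.ofReal x.toReal

/-- The global slope `|∇̃ f|(x) = sup_{y ≠ x} [f x - f y]⁺ / ρ(x,y)` of `f : M → ℝ ∪ {+∞}`. -/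
noncomputable def globalSlope {M : Type*} [MetricSpace M] (f : M → EReal) (x : M) : ℝ≥0∞ :=
  ⨆ y ∈ {y : M | y ≠ x}, erealPos (f x - f y) / edist x y

/-- The local slope `|∇ f|(x) = limsup_{y → x, y ≠ x} [f x - f y]⁺ / ρ(x,y)`. -/
noncomputable def localSlope {M : Type*} [MetricSpace M] (f : M → EReal) (x : M) : ℝ≥0∞ :=
  Filter.limsup (fun y => erealPos (f x - f y) / edist x y) (𝓝[≠] x)

/-- `ε`-global-critical points: `x ∈ dom f` with `f y ≥ f x - ε·ρ(y,x)` for all `y`. -/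
def epsCrit {M : Type*} [MetricSpace M] (ε : ℝ) (f : M → EReal) : Set M :=
  {x | f x ≠ ⊤ ∧ ∀ y, f x - ↑(ε * dist y x) ≤ f y}

lemma ofReal_lt_erealPos_iff {a : ℝ} (ha : 0 ≤ a) {t : EReal} :
    ENNReal.ofReal a < erealPos t ↔ (a : EReal) < t := by
  induction t with
  | bot => simp [erealPos]
  | coe t => simpa [erealPos, ENNReal.ofReal_lt_ofReal_iff'] using fun h => ha.trans_lt h
  | top => simp [erealPos]

lemma erealPos_lt_ofReal_iff {a : ℝ} (ha : 0 < a) {t : EReal} :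
    erealPos t < ENNReal.ofReal a ↔ t < (a : EReal) := by
  induction t with
  | bot => simp [erealPos, ha]
  | coe t => simp [erealPos, ENNReal.ofReal_lt_ofReal_iff ha]
  | top => simp [erealPos]

section Slope

variable {M : Type*} [MetricSpace M]

lemma ofReal_lt_erealPos_div_edist_iff {x y : M} (hxy : x ≠ y) {a : ℝ} (ha : 0 ≤ a) {t : EReal} :
    ENNReal.ofReal a < erealPos t / edist x y ↔ ((a * dist x y : ℝ) : EReal) < t := by
  rw [ENNReal.lt_div_iff_mul_lt (.inl (edist_pos.2 hxy).ne') (.inl (edist_ne_top x y)),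
    edist_dist, ← ENNReal.ofReal_mul ha, ofReal_lt_erealPos_iff (by positivity)]

lemma erealPos_div_edist_lt_ofReal_iff {x y : M} (hxy : x ≠ y) {a : ℝ} (ha : 0 < a) {t : EReal} :
    erealPos t / edist x y < ENNReal.ofReal a ↔ t < ((a * dist x y : ℝ) : EReal) := by
  rw [ENNReal.div_lt_iff (.inl (edist_pos.2 hxy).ne') (.inl (edist_ne_top x y)),
    edist_dist, ← ENNReal.ofReal_mul ha.le,
    erealPos_lt_ofReal_iff (mul_pos ha (dist_pos.2 hxy))]

lemma frequently_lt_sub_of_lt_localSlope {f : M → EReal} {x : M} {a : ℝ} (ha : 0 ≤ a)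
    (h : ENNReal.ofReal a < localSlope f x) :
    ∃ᶠ y in 𝓝[≠] x, ((a * dist x y : ℝ) : EReal) < f x - f y :=
  ((frequently_lt_of_lt_limsup (by isBoundedDefault) h).and_eventually self_mem_nhdsWithin).mono
    fun _ ⟨hy, hyx⟩ => (ofReal_lt_erealPos_div_edist_iff (Ne.symm hyx) ha).1 hy

lemma eventually_sub_lt_of_localSlope_lt {f : M → EReal} {x : M} {a : ℝ} (ha : 0 < a)
    (h : localSlope f x < ENNReal.ofReal a) :
    ∀ᶠ y in 𝓝[≠] x, f x - f y < ((a * dist x y : ℝ) : EReal) := by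
  filter_upwards [eventually_lt_of_limsup_lt h, self_mem_nhdsWithin] with y hy hyx
  exact (erealPos_div_edist_lt_ofReal_iff (Ne.symm hyx) ha).1 hy

end Slope

lemma LowerSemicontinuous.add_coe {X : Type*} [TopologicalSpace X] {f : X → EReal}
    (hf : LowerSemicontinuous f) {φ : X → ℝ} (hφ : Continuous φ) :
    LowerSemicontinuous fun x => f x + φ x :=
  hf.add' (continuous_coe_real_ereal.comp hφ).lowerSemicontinuous fun _ =>
    EReal.continuousAt_add (.inr (EReal.coe_ne_bot _)) (.inr (EReal.coe_ne_top _))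

lemma LowerSemicontinuous.sub_coe {X : Type*} [TopologicalSpace X] {f : X → EReal}
    (hf : LowerSemicontinuous f) {φ : X → ℝ} (hφ : Continuous φ) :
    LowerSemicontinuous fun x => f x - φ x := by
  simpa only [sub_eq_add_neg, EReal.coe_neg, Pi.neg_apply] using hf.add_coe hφ.neg

section Ekeland

variable {M : Type*} [MetricSpace M] {f : M → EReal} {ε : ℝ}

def ekelandSet (f : M → EReal) (ε : ℝ) (x : M) : Set M :=
  {y | f y + ↑(ε * dist y x) ≤ f x}

lemma self_mem_ekelandSet (x : M) : x ∈ ekelandSet f ε x := by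
  simp [ekelandSet]

lemma ne_top_of_mem_ekelandSet {x y : M} (hy : y ∈ ekelandSet f ε x) (hx : f x ≠ ⊤) :
    f y ≠ ⊤ := by
  intro hy_top
  rw [ekelandSet, Set.mem_ofPred_eq, hy_top, EReal.top_add_coe, top_le_iff] at hy
  exact hx hy

lemma ekelandSet_subset (hε : 0 ≤ ε) {x y : M} (hy : y ∈ ekelandSet f ε x) :
    ekelandSet f ε y ⊆ ekelandSet f ε x := fun z hz =>
  calc f z + ↑(ε * dist z x) ≤ f z + ↑(ε * dist z y) + ↑(ε * dist y x) := by
        rw [add_assoc, ← EReal.coe_add, ← mul_add]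
        gcongr
        exact dist_triangle z y x
    _ ≤ f y + ↑(ε * dist y x) := by gcongr; exact hz
    _ ≤ f x := hy

lemma isClosed_ekelandSet (hf : LowerSemicontinuous f) (x : M) : IsClosed (ekelandSet f ε x) :=
  (hf.add_coe (continuous_const.mul (continuous_id.dist continuous_const))).isClosed_preimage _

lemma exists_mem_ekelandSet_forall_dist_lt (hbdd : ∃ C : ℝ, ∀ y, (C : EReal) ≤ f y)
    (hε : 0 < ε) {x : M} (hx : f x ≠ ⊤) {r : ℝ} (hr : 0 < r) :
    ∃ y ∈ ekelandSet f ε x, ∀ z ∈ ekelandSet f ε y, dist z y < r := by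
  obtain ⟨C, hC⟩ := hbdd
  set m := ⨅ z ∈ ekelandSet f ε x, f z
  have hm_top : m ≠ ⊤ := ne_top_of_le_ne_top hx (biInf_le _ (self_mem_ekelandSet x))
  have hm_bot : m ≠ ⊥ := ne_bot_of_le_ne_bot (EReal.coe_ne_bot C) (le_iInf₂ fun z _ => hC z)
  have hm_lt : m < m + ↑(ε * r) := by
    rw [← EReal.coe_toReal hm_top hm_bot, ← EReal.coe_add, EReal.coe_lt_coe_iff]
    linarith [mul_pos hε hr]
  obtain ⟨y, hyx, hy⟩ : ∃ y ∈ ekelandSet f ε x, f y < m + ↑(ε * r) := by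
    simpa only [m, iInf_lt_iff, exists_prop] using hm_lt
  refine ⟨y, hyx, fun z hz => lt_of_not_ge fun hrz => ?_⟩
  have hmz : m ≤ f z := biInf_le _ (ekelandSet_subset hε.le hyx hz)
  -- argue by contradiction so as not to cancel `f z` in `EReal`
  have : f z + ↑(ε * r) ≤ f z + ↑(ε * dist z y) := by gcongr
  exact (this.trans hz).not_gt (hy.trans_le (by gcongr))

lemma exists_seq_mem_ekelandSet (hbdd : ∃ C : ℝ, ∀ y, (C : EReal) ≤ f y) (hε : 0 < ε)
    {x₀ : M} (hx₀ : f x₀ ≠ ⊤) :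
    ∃ u : ℕ → M, u 0 = x₀ ∧ (∀ n, u (n + 1) ∈ ekelandSet f ε (u n)) ∧
      ∀ n, ∀ z ∈ ekelandSet f ε (u (n + 1)), dist z (u (n + 1)) < 1 / ((n : ℝ) + 1) := by
  choose! next hnext_mem hnext_dist using fun (n : ℕ) (x : M) (hx : f x ≠ ⊤) =>
    exists_mem_ekelandSet_forall_dist_lt hbdd hε hx (Nat.one_div_pos_of_nat (n := n))
  let u : ℕ → M := fun n => Nat.rec x₀ (fun k xk => next k xk) n
  have hu_top : ∀ n, f (u n) ≠ ⊤ := by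
    intro n
    induction n with
    | zero => exact hx₀
    | succ n ih => exact ne_top_of_mem_ekelandSet (hnext_mem n _ ih) ih
  exact ⟨u, rfl, fun n => hnext_mem n _ (hu_top n), fun n => hnext_dist n _ (hu_top n)⟩

theorem exists_forall_mem_ekelandSet_eq [CompleteSpace M] (hf : LowerSemicontinuous f)
    (hbdd : ∃ C : ℝ, ∀ y, (C : EReal) ≤ f y) (hε : 0 < ε) {x₀ : M} (hx₀ : f x₀ ≠ ⊤) :
    ∃ x ∈ ekelandSet f ε x₀, ∀ y ∈ ekelandSet f ε x, y = x := by
  obtain ⟨u, rfl, hu_mem, hu_dist⟩ := exists_seq_mem_ekelandSet hbdd hε hx₀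
  have hchain : ∀ n k, n ≤ k → u (k + 1) ∈ ekelandSet f ε (u (n + 1)) := by
    intro n k hnk
    induction k, hnk using Nat.le_induction with
    | base => exact self_mem_ekelandSet _
    | succ k _ ih => exact ekelandSet_subset hε.le ih (hu_mem (k + 1))
  have htendsto : ∀ z, (∀ n, z ∈ ekelandSet f ε (u (n + 1))) →
      Tendsto (fun n => u (n + 1)) atTop (𝓝 z) := fun z hz =>
    tendsto_iff_dist_tendsto_zero.2 <| squeeze_zero (fun _ => dist_nonneg)
      (fun n => (dist_comm _ _).trans_le (hu_dist n z (hz n)).le)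
      tendsto_one_div_add_atTop_nhds_zero_nat
  obtain ⟨x, hx⟩ := cauchySeq_tendsto_of_complete <|
    cauchySeq_of_le_tendsto_0' _ (fun n k hnk => (dist_comm _ _).trans_le
      (hu_dist n _ (hchain n k hnk)).le) tendsto_one_div_add_atTop_nhds_zero_nat
  have hx_mem : ∀ n, x ∈ ekelandSet f ε (u (n + 1)) := fun n =>
    (isClosed_ekelandSet hf _).mem_of_tendsto hx (eventually_atTop.2 ⟨n, hchain n⟩)
  exact ⟨x, ekelandSet_subset hε.le (hu_mem 0) (hx_mem 0), fun y hy =>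
    tendsto_nhds_unique (htendsto y fun n => ekelandSet_subset hε.le (hx_mem n) hy) hx⟩

theorem IsClosed.exists_forall_mem_ekelandSet_eq [CompleteSpace M] {K : Set M}
    (hK : IsClosed K) (hf : LowerSemicontinuous f) (hbdd : ∃ C : ℝ, ∀ y, (C : EReal) ≤ f y)
    (hε : 0 < ε) {x₀ : M} (hx₀K : x₀ ∈ K) (hx₀ : f x₀ ≠ ⊤) :
    ∃ x ∈ K, x ∈ ekelandSet f ε x₀ ∧ ∀ y ∈ K, y ∈ ekelandSet f ε x → y = x := by
  have := hK.completeSpace_coe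
  obtain ⟨⟨x, hxK⟩, hx, hmin⟩ := _root_.exists_forall_mem_ekelandSet_eq
    (f := f ∘ Subtype.val) (hf.comp continuous_subtype_val) (hbdd.imp fun _ hC y => hC y) hε
    (x₀ := ⟨x₀, hx₀K⟩) hx₀
  exact ⟨x, hxK, hx, fun y hyK hy => congrArg Subtype.val (hmin ⟨y, hyK⟩ hy)⟩

end Ekeland

section Critical

variable {M : Type*} [MetricSpace M] {f : M → EReal} {g : M → ℝ} {ε : ℝ}

theorem localSlope_le_of_forall_mem_ekelandSet_eq {x : M} (hε : 0 < ε)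
    (hslope : localSlope f x ≠ 0 → localSlope (fun y => (g y : EReal)) x < localSlope f x)
    (hmin : ∀ y, f y - ↑(g y) ≤ f x - ↑(g x) → y ∈ ekelandSet f ε x → y = x) :
    localSlope f x ≤ ENNReal.ofReal ε := by
  by_contra! hlt
  obtain ⟨r, hr, hr_gt, hr_lt⟩ :=
    ENNReal.lt_iff_exists_real_btwn.1 (max_lt hlt (hslope (pos_of_gt hlt).ne'))
  have hεr : ε < r := (ENNReal.ofReal_lt_ofReal_iff_of_nonneg hε.le).1
    ((le_max_left _ _).trans_lt hr_gt)
  obtain ⟨y, hfy, hgy, hyx⟩ := ((frequently_lt_sub_of_lt_localSlope hr hr_lt).and_eventually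
    ((eventually_sub_lt_of_localSlope_lt (hε.trans hεr)
      ((le_max_right _ _).trans_lt hr_gt)).and self_mem_nhdsWithin)).exists
  rw [dist_comm] at hfy hgy
  have hfy' : f y + ↑(r * dist y x) < f x := add_comm (f y) _ ▸ EReal.add_lt_of_lt_sub hfy
  have hgy' : g x - g y < r * dist y x := by exact_mod_cast hgy
  refine hyx (hmin y ?_ ?_)
  · calc f y - ↑(g y) = f y + ↑(-g y) := by rw [EReal.coe_neg, sub_eq_add_neg]
      _ ≤ f y + ↑(r * dist y x - g x) := by gcongr; linarith
      _ = f y + ↑(r * dist y x) - ↑(g x) := by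
        rw [EReal.coe_sub, sub_eq_add_neg, sub_eq_add_neg, add_assoc]
      _ ≤ f x - ↑(g x) := EReal.sub_le_sub hfy'.le le_rfl
  · exact (show f y + ↑(ε * dist y x) ≤ f y + ↑(r * dist y x) by gcongr).trans hfy'.le

theorem exists_localSlope_le_of_ne_top [CompleteSpace M] (hlsc : LowerSemicontinuous f)
    (hbdd : ∃ C : ℝ, ∀ x, (C : EReal) ≤ f x) (hg : Continuous g)
    (hslope : ∀ x, f x ≠ ⊤ → localSlope f x ≠ 0 →
      localSlope (fun y => (g y : EReal)) x < localSlope f x)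
    (hε : 0 < ε) {x₀ : M} (hx₀ : f x₀ ≠ ⊤) :
    ∃ x, f x ≠ ⊤ ∧ localSlope f x ≤ ENNReal.ofReal ε ∧
      f x ≤ f x₀ - ↑(ε * dist x x₀) ∧ f x - ↑(g x) ≤ f x₀ - ↑(g x₀) := by
  have hK : IsClosed {y | f y - ↑(g y) ≤ f x₀ - ↑(g x₀)} := (hlsc.sub_coe hg).isClosed_preimage _
  obtain ⟨x, hxK, hx, hmin⟩ :=
    hK.exists_forall_mem_ekelandSet_eq hlsc hbdd hε (le_refl (f x₀ - ↑(g x₀))) hx₀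
  have hx_top := ne_top_of_mem_ekelandSet hx hx₀
  refine ⟨x, hx_top, localSlope_le_of_forall_mem_ekelandSet_eq hε (hslope x hx_top)
    fun y hy => hmin y (hy.trans hxK), ?_, hxK⟩
  exact (EReal.le_sub_iff_add_le (.inl (EReal.coe_ne_bot _)) (.inl (EReal.coe_ne_top _))).2 hx

end Critical

/-- for `f` proper lsc bounded below on a complete metric space and `g : M → ℝ`
continuous with `|∇f| > |∇g|` wherever `|∇f| ≠ 0` on `dom f`, for each `ε > 0` and `x₀`
there is an `ε`-critical point `x` of `f` with `f(x) ≤ f(x₀) - ε·ρ(x,x₀)` and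
`f(x₀) - g(x₀) ≥ f(x) - g(x)`; in particular `f - g ≥ inf_{ε-crit f} (f - g)` everywhere. -/
theorem exists_epsCrit_local_slope {M : Type*} [MetricSpace M] [CompleteSpace M]
    (f : M → EReal) (g : M → ℝ)
    (hproper : ∃ x, f x ≠ ⊤) (hlsc : LowerSemicontinuous f)
    (hbdd : ∃ C : ℝ, ∀ x, (C : EReal) ≤ f x) (hg : Continuous g)
    (hslope : ∀ x, f x ≠ ⊤ → localSlope f x ≠ 0 →
      localSlope (fun y => (g y : EReal)) x < localSlope f x) :
    ∀ ε : ℝ, 0 < ε → ∀ x₀ : M,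
      (∃ x, f x ≠ ⊤ ∧ localSlope f x ≤ ENNReal.ofReal ε ∧
        f x ≤ f x₀ - ↑(ε * dist x x₀) ∧ f x - ↑(g x) ≤ f x₀ - ↑(g x₀)) ∧
      (⨅ y ∈ {y | f y ≠ ⊤ ∧ localSlope f y ≤ ENNReal.ofReal ε}, (f y - ↑(g y))) ≤
        f x₀ - ↑(g x₀) := by
  intro ε hε x₀
  obtain ⟨x, hx_top, hx_slope, hx_le, hx_sub⟩ : ∃ x, f x ≠ ⊤ ∧ localSlope f x ≤ ENNReal.ofReal ε ∧
      f x ≤ f x₀ - ↑(ε * dist x x₀) ∧ f x - ↑(g x) ≤ f x₀ - ↑(g x₀) := by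
    by_cases hx₀ : f x₀ = ⊤
    · obtain ⟨z, hz⟩ := hproper
      obtain ⟨x, hx_top, hx_slope, -⟩ := exists_localSlope_le_of_ne_top hlsc hbdd hg hslope hε hz
      simp only [hx₀, EReal.top_sub_coe, le_top, and_true]
      exact ⟨x, hx_top, hx_slope⟩
    · exact exists_localSlope_le_of_ne_top hlsc hbdd hg hslope hε hx₀
  exact ⟨⟨x, hx_top, hx_slope, hx_le, hx_sub⟩, iInf₂_le_of_le x ⟨hx_top, hx_slope⟩ hx_sub⟩
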